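/- Let T be the set of all functions r whose domain is a countable ordinal and whose values lie in ω, such that r is injective on the successor ordinals in its domain with values in ω \ {0}, and r takes the value 0 at 0 and at every limit ordinal in its domain; order T by function extension. Then T is a well-stratified tree (every branch is order-isomorphic to an ordinal), every branch of T is countable, and T admits no strictly order-preserving function into ℝ. -/

import Mathlib

universe u

/-- A tree order: a partial order with a minimum element in which the set of
predecessors of any element is a chain. -/
def IsTreeOrder (X : Type u) [PartialOrder X] : Prop :=
  (∃ r : X, ∀ x : X, r ≤ x) ∧ ∀ x : X, IsChain (· ≤ ·) {y : X | y ≤ x}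

/-- A branch: a maximal chain. -/
def IsBranch {X : Type u} [PartialOrder X] (B : Set X) : Prop :=
  IsMaxChain (· ≤ ·) B

/-- The tree `T`: functions from a countable ordinal `dom` into `ω` (coded as total
functions on the ordinals vanishing outside `dom`) which are injective with nonzero
values on the successor ordinals in their domain, and zero at `0` and at every limit
ordinal in their domain. -/
@[ext]
structure TTree : Type 1 where
  dom : Ordinal.{0}
  fn : Ordinal.{0} → ℕ
  dom_lt : dom < (Cardinal.aleph 1).ord
  zero_outside : ∀ β : Ordinal, ¬ β < dom → fn β = 0
  succ_ne_zero : ∀ β : Ordinal, β < dom → (∃ γ : Ordinal, β = γ + 1) → fn β ≠ 0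
  succ_inj : ∀ β γ : Ordinal, β < dom → γ < dom → (∃ β' : Ordinal, β = β' + 1) →
    (∃ γ' : Ordinal, γ = γ' + 1) → fn β = fn γ → β = γ
  zero_or_limit : ∀ β : Ordinal, β < dom → (β = 0 ∨ Order.IsSuccLimit β) → fn β = 0

/-- `T` is ordered by function extension. -/
instance : PartialOrder TTree where
  le r s := r.dom ≤ s.dom ∧ ∀ β : Ordinal, β < r.dom → s.fn β = r.fn β
  le_refl r := ⟨le_rfl, fun _ _ => rfl⟩
  le_trans r s t hrs hst :=
    ⟨hrs.1.trans hst.1, fun β hβ => (hst.2 β (hβ.trans_le hrs.1)).trans (hrs.2 β hβ)⟩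
  le_antisymm r s hrs hsr := by
    have hd : r.dom = s.dom := le_antisymm hrs.1 hsr.1
    have hf : r.fn = s.fn := by
      funext β
      by_cases hβ : β < r.dom
      · exact (hrs.2 β hβ).symm
      · rw [r.zero_outside β hβ, s.zero_outside β (by rwa [← hd])]
    ext : 1
    · exact hd
    · exact hf

/-!
Branches: along a chain the element is determined by its domain, so a chain is order-isomorphic,
via `dom`, to a set of ordinals. The union of the chain is injective on the successor ordinals below
the supremum σ of the domains, with values in `ℕ`, so σ and hence the chain are countable.

No ℝ-grading: after composing with `arctan` we may assume a grading `g` is bounded. Call an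
extension `y` of `x` *spare for `A`* if all values `y` adds to `x` lie in `A ∪ {0}` and infinitely
many elements of `A` are still unused by `y`. Starting from the root we pick `x₀ < x₁ < ⋯` and
shrinking sets `A₀ ⊇ A₁ ⊇ ⋯` such that `g xₙ₊₁` is within `1/(n+1)` of the supremum of `g` over the
spare extensions of `(xₙ, Aₙ)`, and such that at each stage one element `aₙ ∈ Aₙ` unused by
`xₙ₊₁` is discarded for good. The union `x_ω` of the `xₙ` has limit length, so it extends by one
place with the value `0`; since the discarded `aₙ` are never used, this extension `z` is spare for
every `(xₙ, Aₙ)`, which forces `g z ≤ g x_ω < g z`.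
-/

open Set Function

theorem Ordinal.countable_Iio_of_injOn_add_one {α : Type*} [Countable α] {σ : Ordinal}
    {f : Ordinal → α} (hf : InjOn f {β | β < σ ∧ ∃ γ, β = γ + 1}) : (Iio σ).Countable := by
  have hsucc : {β | β < σ ∧ ∃ γ, β = γ + 1}.Countable :=
    (mapsTo_univ f _).countable_of_injOn hf countable_univ
  have hpred : {β : Ordinal | σ = β + 1}.Subsingleton := by
    rintro β rfl γ (h : _ = γ + 1)
    exact Order.succ_injective (by simpa only [Order.succ_eq_add_one] using h)
  refine ((hsucc.preimage fun β γ (h : β + 1 = γ + 1) => by simpa using h).union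
    hpred.countable).mono fun β hβ => ?_
  by_cases h : β + 1 < σ
  · exact Or.inl ⟨h, β, rfl⟩
  · exact Or.inr (le_antisymm (not_lt.1 h) (Order.add_one_le_of_lt hβ))

theorem Ordinal.exists_orderIso_Iio (α : Type*) [LinearOrder α] [WellFoundedLT α] [Small.{u} α] :
    ∃ γ : Ordinal.{u}, Nonempty (α ≃o Iio γ) :=
  ⟨Ordinal.type (α := Shrink.{u} α) (· < ·),
    ⟨(orderIsoShrink α).trans (OrderIso.ofRelIsoLT (Ordinal.enum (· < ·)).symm)⟩⟩

namespace TTree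

lemma dom_le_dom {x y : TTree} (h : x ≤ y) : x.dom ≤ y.dom := h.1

lemma fn_eq_of_le {x y : TTree} (h : x ≤ y) {β : Ordinal} (hβ : β < x.dom) : y.fn β = x.fn β :=
  h.2 β hβ

lemma eq_of_le_of_dom_le {x y : TTree} (h : x ≤ y) (hd : y.dom ≤ x.dom) : x = y :=
  le_antisymm h ⟨hd, fun β hβ => (h.2 β (hβ.trans_le hd)).symm⟩

lemma dom_lt_dom {x y : TTree} (h : x < y) : x.dom < y.dom :=
  (dom_le_dom h.le).lt_of_ne fun hd => h.ne (eq_of_le_of_dom_le h.le hd.ge)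

lemma le_of_le_of_le_of_dom_le {x y z : TTree} (hx : x ≤ z) (hy : y ≤ z) (hd : x.dom ≤ y.dom) :
    x ≤ y :=
  ⟨hd, fun β hβ => (hy.2 β (hβ.trans_le hd)).symm.trans (hx.2 β hβ)⟩

lemma fn_dom (x : TTree) : x.fn x.dom = 0 := x.zero_outside _ (lt_irrefl _)

lemma not_zero_or_isSuccLimit_of_add_one {β : Ordinal} (h : ∃ γ, β = γ + 1) :
    ¬ (β = 0 ∨ Order.IsSuccLimit β) := by
  obtain ⟨γ, rfl⟩ := h
  rintro (h | h)
  · simp at h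
  · exact Order.not_isSuccLimit_add_one γ h

lemma dom_lt_omega1_add_one (x : TTree) : x.dom + 1 < (Cardinal.aleph 1).ord := by
  rw [← Order.succ_eq_add_one]
  exact (Cardinal.isSuccLimit_ord (Cardinal.aleph0_le_aleph 1)).succ_lt x.dom_lt

def root : TTree where
  dom := 0
  fn := 0
  dom_lt := (Cardinal.isSuccLimit_ord (Cardinal.aleph0_le_aleph 1)).bot_lt
  zero_outside _ _ := rfl
  succ_ne_zero _ hβ := absurd hβ not_lt_zero
  succ_inj _ _ hβ := absurd hβ not_lt_zero
  zero_or_limit _ _ _ := rfl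

lemma root_le (x : TTree) : root ≤ x :=
  ⟨zero_le, fun _ hβ => absurd hβ not_lt_zero⟩

theorem isTreeOrder : IsTreeOrder TTree :=
  ⟨⟨root, root_le⟩, fun _ y hy z hz _ =>
    (le_total y.dom z.dom).imp (le_of_le_of_le_of_dom_le hy hz) (le_of_le_of_le_of_dom_le hz hy)⟩

section Chain

variable {B : Set TTree}

lemma le_iff_dom_le_of_isChain (hB : IsChain (· ≤ ·) B) {x y : TTree} (hx : x ∈ B) (hy : y ∈ B) :
    x ≤ y ↔ x.dom ≤ y.dom :=
  ⟨dom_le_dom, fun hd => (hB.total hx hy).elim id fun h => (eq_of_le_of_dom_le h hd).symm.le⟩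

lemma injOn_dom_of_isChain (hB : IsChain (· ≤ ·) B) : InjOn dom B := fun _ hx _ hy h =>
  le_antisymm ((le_iff_dom_le_of_isChain hB hx hy).2 h.le)
    ((le_iff_dom_le_of_isChain hB hy hx).2 h.ge)

open Classical in
/-- The union of the functions in `B`, meaningful when `B` is a chain. -/
noncomputable def chainFn (B : Set TTree) (β : Ordinal) : ℕ :=
  if h : ∃ x ∈ B, β < x.dom then h.choose.fn β else 0

lemma chainFn_eq (hB : IsChain (· ≤ ·) B) {x : TTree} (hx : x ∈ B) {β : Ordinal}
    (hβ : β < x.dom) : chainFn B β = x.fn β := by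
  have h : ∃ y ∈ B, β < y.dom := ⟨x, hx, hβ⟩
  rw [chainFn, dif_pos h]
  obtain ⟨hy, hβy⟩ := h.choose_spec
  rcases hB.total hy hx with hle | hle
  · exact (fn_eq_of_le hle hβy).symm
  · exact fn_eq_of_le hle hβ

lemma chainFn_eq_zero {β : Ordinal} (h : ¬ ∃ x ∈ B, β < x.dom) : chainFn B β = 0 := dif_neg h

lemma chainFn_injOn (hB : IsChain (· ≤ ·) B) :
    InjOn (chainFn B) {β | (∃ x ∈ B, β < x.dom) ∧ ∃ γ, β = γ + 1} := by
  rintro β ⟨⟨x, hx, hβ⟩, hβs⟩ γ ⟨⟨y, hy, hγ⟩, hγs⟩ h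
  obtain ⟨z, hz, hxz, hyz⟩ := hB.directedOn x hx y hy
  have hβz := hβ.trans_le (dom_le_dom hxz)
  have hγz := hγ.trans_le (dom_le_dom hyz)
  rw [chainFn_eq hB hz hβz, chainFn_eq hB hz hγz] at h
  exact z.succ_inj β γ hβz hγz hβs hγs h

theorem countable_of_isChain (hB : IsChain (· ≤ ·) B) : B.Countable := by
  have hbdd : BddAbove (dom '' B) :=
    ⟨(Cardinal.aleph 1).ord, forall_mem_image.2 fun x _ => x.dom_lt.le⟩
  have hsub : {β | β < sSup (dom '' B) ∧ ∃ γ, β = γ + 1} ⊆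
      {β | (∃ x ∈ B, β < x.dom) ∧ ∃ γ, β = γ + 1} := fun β ⟨hβ, hs⟩ =>
    ⟨by simpa using (lt_csSup_iff' hbdd).1 hβ, hs⟩
  have hIio := Ordinal.countable_Iio_of_injOn_add_one ((chainFn_injOn hB).mono hsub)
  refine MapsTo.countable_of_injOn (t := Iic (sSup (dom '' B)))
    (fun x hx => le_csSup hbdd (mem_image_of_mem dom hx)) (injOn_dom_of_isChain hB) ?_
  rw [← Iio_insert]
  exact hIio.insert _

theorem exists_orderIso_Iio_of_isChain (hB : IsChain (· ≤ ·) B) :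
    ∃ γ : Ordinal.{u}, Nonempty (B ≃o Iio γ) := by
  let e : B ↪o Ordinal.{0} := OrderEmbedding.ofMapLEIff (fun x => x.1.dom) fun x y =>
    (le_iff_dom_le_of_isChain hB x.2 y.2).symm
  have := (countable_of_isChain hB).to_subtype
  have := (countable_range e).to_subtype
  obtain ⟨γ, ⟨f⟩⟩ := Ordinal.exists_orderIso_Iio.{u} (range e)
  exact ⟨γ, ⟨e.orderIso.trans f⟩⟩

end Chain

def used (x : TTree) : Set ℕ := range x.fn \ {0}

open Classical in
noncomputable def snoc (x : TTree) (v : ℕ) (hv : (∃ γ, x.dom = γ + 1) → v ∉ range x.fn) :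
    TTree where
  dom := x.dom + 1
  fn β := if β = x.dom ∧ ∃ γ, x.dom = γ + 1 then v else x.fn β
  dom_lt := x.dom_lt_omega1_add_one
  zero_outside β hβ := by
    rw [Order.lt_add_one_iff, not_le] at hβ
    rw [if_neg fun h => hβ.ne' h.1]
    exact x.zero_outside β hβ.not_gt
  succ_ne_zero β hβ hs := by
    split_ifs with h
    · exact fun hv0 => hv h.2 ⟨x.dom, x.fn_dom.trans hv0.symm⟩
    · exact x.succ_ne_zero β ((Order.lt_add_one_iff.1 hβ).lt_of_ne fun e => h ⟨e, e ▸ hs⟩) hs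
  succ_inj β γ hβ hγ hsβ hsγ h := by
    split_ifs at h with h₁ h₂ h₂
    · exact h₁.1.trans h₂.1.symm
    · exact (hv h₁.2 ⟨γ, h.symm⟩).elim
    · exact (hv h₂.2 ⟨β, h⟩).elim
    · exact x.succ_inj β γ ((Order.lt_add_one_iff.1 hβ).lt_of_ne fun e => h₁ ⟨e, e ▸ hsβ⟩)
        ((Order.lt_add_one_iff.1 hγ).lt_of_ne fun e => h₂ ⟨e, e ▸ hsγ⟩) hsβ hsγ h
  zero_or_limit β hβ hz := by
    rw [if_neg fun (h : β = x.dom ∧ _) => not_zero_or_isSuccLimit_of_add_one (h.1 ▸ h.2) hz]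
    rcases (Order.lt_add_one_iff.1 hβ).lt_or_eq with hβ | rfl
    · exact x.zero_or_limit β hβ hz
    · exact x.fn_dom

lemma lt_snoc (x : TTree) (v : ℕ) (hv : (∃ γ, x.dom = γ + 1) → v ∉ range x.fn) :
    x < snoc x v hv := by
  refine lt_of_le_of_ne ⟨(Order.lt_add_one_iff.2 le_rfl).le, fun β hβ => if_neg ?_⟩ fun h => ?_
  · exact fun h => hβ.ne h.1
  · exact (Order.lt_add_one_iff.2 le_rfl).ne (congrArg dom h)

def extWith (x : TTree) (A : Set ℕ) : Set TTree :=
  {y | x ≤ y ∧ ∀ β, x.dom ≤ β → y.fn β ∈ insert 0 A}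

def extWithSpare (x : TTree) (A : Set ℕ) : Set TTree :=
  {y ∈ extWith x A | (A \ used y).Infinite}

lemma self_mem_extWith (x : TTree) (A : Set ℕ) : x ∈ extWith x A :=
  ⟨le_rfl, fun β hβ => by rw [x.zero_outside β hβ.not_gt]; exact mem_insert 0 A⟩

lemma extWith_trans {x y z : TTree} {A A' : Set ℕ} (hy : y ∈ extWith x A) (hz : z ∈ extWith y A')
    (hA : A' ⊆ insert 0 A) : z ∈ extWith x A := by
  refine ⟨hy.1.trans hz.1, fun β hβ => ?_⟩
  by_cases hβy : β < y.dom
  · rw [fn_eq_of_le hz.1 hβy]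
    exact hy.2 β hβ
  · exact insert_subset (mem_insert 0 A) hA (hz.2 β (not_lt.1 hβy))

lemma used_subset_of_mem_extWith {x y : TTree} {A : Set ℕ} (hy : y ∈ extWith x A) :
    used y ⊆ used x ∪ A := by
  rintro n ⟨⟨β, rfl⟩, hn⟩
  by_cases hβ : β < x.dom
  · exact Or.inl ⟨⟨β, (fn_eq_of_le hy.1 hβ).symm⟩, hn⟩
  · exact Or.inr (((hy.2 β (not_lt.1 hβ))).resolve_left hn)

lemma extWithSpare_subset {x y : TTree} {A A' : Set ℕ} (hy : y ∈ extWith x A) (hA : A' ⊆ A) :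
    extWithSpare y A' ⊆ extWithSpare x A := fun _ hz =>
  ⟨extWith_trans hy hz.1 (hA.trans (subset_insert 0 A)), hz.2.mono (sdiff_subset_sdiff_left hA)⟩

lemma snoc_mem_extWith (x : TTree) (v : ℕ) (hv : (∃ γ, x.dom = γ + 1) → v ∉ range x.fn) :
    snoc x v hv ∈ extWith x {v} := by
  classical
  refine ⟨(lt_snoc x v hv).le, fun β hβ => ?_⟩
  change (if β = x.dom ∧ ∃ γ, x.dom = γ + 1 then v else x.fn β) ∈ _
  split_ifs
  · exact mem_insert_of_mem 0 rfl
  · rw [x.zero_outside β hβ.not_gt]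
    exact mem_insert 0 _

lemma exists_gt_mem_extWithSpare {x : TTree} {A : Set ℕ} (hx : x ∈ extWithSpare x A) :
    ∃ y ∈ extWithSpare x A, x < y := by
  obtain ⟨v, ⟨hvA, hvx⟩, hv0⟩ := (hx.2.sdiff (finite_singleton 0)).nonempty
  have hv : v ∉ range x.fn := fun h => hvx ⟨h, hv0⟩
  refine ⟨snoc x v fun _ => hv, ⟨extWith_trans (self_mem_extWith x A) (snoc_mem_extWith x v _)
    (singleton_subset_iff.2 (mem_insert_of_mem 0 hvA)), ?_⟩, lt_snoc x v _⟩
  refine (hx.2.sdiff (finite_singleton v)).mono ?_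
  rintro n ⟨⟨hnA, hnx⟩, hnv⟩
  refine ⟨hnA, fun hn => ?_⟩
  rcases used_subset_of_mem_extWith (snoc_mem_extWith x v _) hn with h | h
  exacts [hnx h, hnv h]

lemma lt_iSup_dom_iff {c : ℕ → TTree} {β : Ordinal} :
    β < ⨆ n, (c n).dom ↔ ∃ x ∈ range c, β < x.dom :=
  Ordinal.lt_iSup_iff.trans (exists_range_iff (p := fun x : TTree => β < x.dom)).symm

noncomputable def seqLimit (c : ℕ → TTree) (hc : Monotone c) : TTree where
  dom := ⨆ n, (c n).dom
  fn := chainFn (range c)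
  dom_lt := by
    refine Ordinal.iSup_lt_of_lt_cof ?_ fun n => (c n).dom_lt
    rw [Cardinal.isRegular_aleph_one.cof_ord, Cardinal.mk_nat]
    exact Cardinal.aleph0_lt_aleph_one
  zero_outside _ hβ := chainFn_eq_zero (mt lt_iSup_dom_iff.2 hβ)
  succ_ne_zero β hβ hs := by
    obtain ⟨x, hx, hβx⟩ := lt_iSup_dom_iff.1 hβ
    rw [chainFn_eq hc.isChain_range hx hβx]
    exact x.succ_ne_zero β hβx hs
  succ_inj _ _ hβ hγ hsβ hsγ :=
    chainFn_injOn hc.isChain_range ⟨lt_iSup_dom_iff.1 hβ, hsβ⟩ ⟨lt_iSup_dom_iff.1 hγ, hsγ⟩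
  zero_or_limit β hβ hz := by
    obtain ⟨x, hx, hβx⟩ := lt_iSup_dom_iff.1 hβ
    rw [chainFn_eq hc.isChain_range hx hβx]
    exact x.zero_or_limit β hβx hz

lemma le_seqLimit {c : ℕ → TTree} (hc : Monotone c) (n : ℕ) : c n ≤ seqLimit c hc :=
  ⟨Ordinal.le_iSup (fun n => (c n).dom) n,
    fun _ hβ => chainFn_eq hc.isChain_range (mem_range_self n) hβ⟩

lemma seqLimit_dom_ne_add_one {c : ℕ → TTree} (hc : StrictMono c) (γ : Ordinal) :
    (seqLimit c hc.monotone).dom ≠ γ + 1 := by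
  intro h
  obtain ⟨n, hn⟩ := exists_eq_ciSup_of_not_isSuccPrelimit (f := fun n => (c n).dom) <| by
    rw [show (⨆ n, (c n).dom) = γ + 1 from h, ← Order.succ_eq_add_one]
    exact Order.not_isSuccPrelimit_succ γ
  exact (dom_lt_dom (hc n.lt_succ_self)).not_ge (hn ▸ Ordinal.le_iSup _ (n + 1))

lemma seqLimit_mem_extWith {c : ℕ → TTree} (hc : Monotone c) {x : TTree} {A : Set ℕ} (n : ℕ)
    (h : ∀ m, n ≤ m → c m ∈ extWith x A) : seqLimit c hc ∈ extWith x A := by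
  refine ⟨(h n le_rfl).1.trans (le_seqLimit hc n), fun β hβ => ?_⟩
  by_cases hβL : β < (seqLimit c hc).dom
  · obtain ⟨m, hm⟩ := Ordinal.lt_iSup_iff.1 hβL
    rw [fn_eq_of_le (le_seqLimit hc _) (hm.trans_le (dom_le_dom (hc (le_max_left m n))))]
    exact (h (max m n) (le_max_right m n)).2 β hβ
  · rw [(seqLimit c hc).zero_outside β hβL]
    exact mem_insert 0 A

structure Refines (x : TTree) (A : Set ℕ) (y : TTree) (A' : Set ℕ) (a : ℕ) : Prop where
  lt : x < y
  subset : A' ⊆ A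
  extWithSpare_subset : extWithSpare y A' ⊆ extWithSpare x A
  mem_diff : a ∈ A \ A'
  notMem_used : a ∉ used y

theorem exists_lt_mem_extWithSpare_of_refines {x : ℕ → TTree} {A : ℕ → Set ℕ} {a : ℕ → ℕ}
    (hself : ∀ n, x n ∈ extWithSpare (x n) (A n))
    (h : ∀ n, Refines (x n) (A n) (x (n + 1)) (A (n + 1)) (a n)) :
    ∃ y z, (∀ n, x n ≤ y) ∧ y < z ∧ ∀ n, z ∈ extWithSpare (x n) (A n) := by
  have hx : StrictMono x := strictMono_nat_of_lt_succ fun n => (h n).lt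
  have hA : Antitone A := antitone_nat_of_succ_le fun n => (h n).subset
  have hspare : Antitone fun n => extWithSpare (x n) (A n) :=
    antitone_nat_of_succ_le fun n => (h n).extWithSpare_subset
  set L := seqLimit x hx.monotone
  -- `L` has limit length, so the new place of `z` carries the value `0`.
  let z := snoc L 0 fun ⟨γ, hγ⟩ => (seqLimit_dom_ne_add_one hx γ hγ).elim
  have hz : ∀ n, z ∈ extWith (x n) (A n) := fun n =>
    extWith_trans (seqLimit_mem_extWith hx.monotone n fun m hm => (hspare hm (hself m)).1)
      (snoc_mem_extWith L 0 _) (singleton_subset_iff.2 (mem_insert 0 _))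
  have ha_unused : ∀ m, a m ∉ used z := fun m hm =>
    (used_subset_of_mem_extWith (hz (m + 1)) hm).elim (h m).notMem_used (h m).mem_diff.2
  have ha : Injective a := Injective.of_lt_imp_ne fun m k hmk hmk' =>
    (h m).mem_diff.2 (hmk' ▸ hA (Nat.succ_le_of_lt hmk) (h k).mem_diff.1)
  refine ⟨L, z, le_seqLimit hx.monotone, lt_snoc L 0 _, fun n => ⟨hz n, ?_⟩⟩
  exact infinite_of_injective_forall_mem (f := fun m => a (n + m)) (ha.comp (add_right_injective n))
    fun m => ⟨hA (n.le_add_right m) (h (n + m)).mem_diff.1, ha_unused _⟩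

theorem exists_refines {g : TTree → ℝ} (hg : StrictMono g) (hb : BddAbove (range g)) {x : TTree}
    {A : Set ℕ} (hx : x ∈ extWithSpare x A) {ε : ℝ} (hε : 0 < ε) :
    ∃ y A' a, y ∈ extWithSpare y A' ∧ Refines x A y A' a ∧
      sSup (g '' extWithSpare x A) < g y + ε := by
  set S := sSup (g '' extWithSpare x A)
  have hbdd : BddAbove (g '' extWithSpare x A) := hb.mono (image_subset_range _ _)
  obtain ⟨y₀, hy₀, hxy₀⟩ := exists_gt_mem_extWithSpare hx
  have hS : max (g x) (S - ε) < S :=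
    max_lt ((hg hxy₀).trans_le (le_csSup hbdd (mem_image_of_mem g hy₀))) (sub_lt_self S hε)
  obtain ⟨_, ⟨y, hy, rfl⟩, hgy⟩ := exists_lt_of_lt_csSup ⟨g x, mem_image_of_mem g hx⟩ hS
  obtain ⟨a, haA, hay⟩ := hy.2.nonempty
  have hsub : (A \ used y) \ {a} ⊆ A := sdiff_subset.trans sdiff_subset
  refine ⟨y, (A \ used y) \ {a}, a, ⟨self_mem_extWith y _, ?_⟩,
    ⟨?_, hsub, extWithSpare_subset hy.1 hsub, ⟨haA, fun h => h.2 rfl⟩, hay⟩, ?_⟩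
  · exact (hy.2.sdiff (finite_singleton a)).mono fun n hn => ⟨hn, hn.1.2⟩
  · exact hy.1.1.lt_of_ne (ne_of_apply_ne g ((le_max_left _ _).trans_lt hgy).ne)
  · linarith [le_max_right (g x) (S - ε)]

theorem not_strictMono_of_bddAbove_range {g : TTree → ℝ} (hg : StrictMono g)
    (hb : BddAbove (range g)) : False := by
  choose! next nextSet fresh hspare hrefines hsup using
    fun x A (hx : x ∈ extWithSpare x A) (n : ℕ) =>
      exists_refines hg hb hx (Nat.one_div_pos_of_nat (n := n))
  let p : ℕ → TTree × Set ℕ := fun n =>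
    Nat.rec (root, univ) (fun n q => (next q.1 q.2 n, nextSet q.1 q.2 n)) n
  have hp : ∀ n, (p n).1 ∈ extWithSpare (p n).1 (p n).2 := by
    intro n
    induction n with
    | zero => exact ⟨self_mem_extWith _ _, by simp [p, used, root, infinite_univ]⟩
    | succ n ih => exact hspare _ _ ih n
  obtain ⟨y, z, hy, hyz, hz⟩ :=
    exists_lt_mem_extWithSpare_of_refines hp fun n => hrefines _ _ (hp n) n
  refine (hg hyz).not_ge (le_of_forall_pos_le_add fun ε hε => ?_)
  obtain ⟨n, hn⟩ := exists_nat_one_div_lt hε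
  calc g z ≤ sSup (g '' extWithSpare (p n).1 (p n).2) :=
        le_csSup (hb.mono (image_subset_range _ _)) (mem_image_of_mem g (hz n))
    _ ≤ g (p (n + 1)).1 + 1 / (n + 1) := (hsup _ _ (hp n) n).le
    _ ≤ g y + ε := add_le_add (hg.monotone (hy (n + 1))) hn.le

theorem not_exists_strictMono_real : ¬ ∃ g : TTree → ℝ, StrictMono g := fun ⟨_, hg⟩ =>
  not_strictMono_of_bddAbove_range (Real.arctan_strictMono.comp hg)
    ⟨Real.pi / 2, forall_mem_range.2 fun _ => (Real.arctan_lt_pi_div_two _).le⟩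

end TTree

/-- `T` is a well-stratified tree (every branch is order-isomorphic to an ordinal)
without uncountable branches, and `T` admits no strictly order-preserving function
into ℝ. -/
theorem stmt_13 :
    IsTreeOrder TTree ∧
      (∀ B : Set TTree, IsBranch B →
        B.Countable ∧ ∃ γ : Ordinal, Nonempty (B ≃o Set.Iio γ)) ∧
      ¬ ∃ g : TTree → ℝ, StrictMono g :=
  ⟨TTree.isTreeOrder,
    fun _ hB => ⟨TTree.countable_of_isChain hB.1, TTree.exists_orderIso_Iio_of_isChain hB.1⟩,
    TTree.not_exists_strictMono_real⟩
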